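/- The group presented by ⟨x, y | x⁻²y⁻¹xy, y⁻¹x⁻¹yx⁻¹y⁻¹⟩ is the trivial group. -/

import Mathlib

/-!
Multiplying the two relators gives `x⁻³y⁻¹`, so `y = x⁻³`; substituting this into the first
relator leaves `x⁻¹`, hence `x = 1` and then `y = 1`. As the generators are trivial, so is the
group.
-/

theorem eq_one_of_relators {G : Type*} [Group G] {x y : G}
    (h₁ : x⁻¹ * x⁻¹ * y⁻¹ * x * y = 1) (h₂ : y⁻¹ * x⁻¹ * y * x⁻¹ * y⁻¹ = 1) :
    x = 1 ∧ y = 1 := by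
  have hy : y = x⁻¹ * x⁻¹ * x⁻¹ := by
    have h : x⁻¹ * x⁻¹ * x⁻¹ * y⁻¹ = 1 := calc
      x⁻¹ * x⁻¹ * x⁻¹ * y⁻¹ = (x⁻¹ * x⁻¹ * y⁻¹ * x * y) * (y⁻¹ * x⁻¹ * y * x⁻¹ * y⁻¹) := by
        group
      _ = 1 := by rw [h₁, h₂, one_mul]
    exact (eq_of_mul_inv_eq_one h).symm
  have hx : x = 1 := by
    subst hy
    rw [← inv_eq_one]
    calc x⁻¹ = x⁻¹ * x⁻¹ * (x⁻¹ * x⁻¹ * x⁻¹)⁻¹ * x * (x⁻¹ * x⁻¹ * x⁻¹) := by group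
      _ = 1 := h₁
  subst hx
  exact ⟨rfl, by simpa using hy⟩

theorem PresentedGroup.subsingleton_of_forall_of_eq_one {α : Type*} {rels : Set (FreeGroup α)}
    (h : ∀ a : α, (of a : PresentedGroup rels) = 1) : Subsingleton (PresentedGroup rels) :=
  subsingleton_of_forall_eq 1 fun g => Subgroup.mem_bot.mp (generated_by rels ⊥ h g)

/-- The group presented by ⟨x, y | x⁻²y⁻¹xy, y⁻¹x⁻¹yx⁻¹y⁻¹⟩ is the trivial group. -/
theorem stmt_16 :
    Subsingleton (PresentedGroup
      ({(FreeGroup.of true)⁻¹ * (FreeGroup.of true)⁻¹ * (FreeGroup.of false)⁻¹ *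
          FreeGroup.of true * FreeGroup.of false,
        (FreeGroup.of false)⁻¹ * (FreeGroup.of true)⁻¹ * FreeGroup.of false *
          (FreeGroup.of true)⁻¹ * (FreeGroup.of false)⁻¹} :
        Set (FreeGroup Bool))) := by
  refine PresentedGroup.subsingleton_of_forall_of_eq_one
    (Bool.forall_bool.mpr (eq_one_of_relators ?_ ?_).symm)
  · exact PresentedGroup.one_of_mem (Set.mem_insert _ _)
  · exact PresentedGroup.one_of_mem (Set.mem_insert_of_mem _ rfl)
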